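/- Let U ⊆ ℂ be open with x·(x²+3x+3) ≠ 0 for all x ∈ U. Let Ψ : ℂ → ℂ be twice differentiable on U and satisfy x(x²+3x+3)·Ψ''(x) + (3x²+6x+3)·Ψ'(x) + (x+1)·Ψ(x) = 0 for all x ∈ U, and let g : ℂ → ℂ be twice differentiable on U with g(x)² = x(x²+3x+3) for all x ∈ U. Then ψ := g·Ψ solves ψ'' = Q₂·ψ on U, where Q₂(x) := −(1/4)·(x+1)(x+3)(x²+3)/(x²(x²+3x+3)²). -/

import Mathlib

open Complex

/-- `f` solves the equation `ψ'' = Q·ψ` on the open set `U`. -/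
def SolvesOn (Q f : ℂ → ℂ) (U : Set ℂ) : Prop :=
  (∀ x ∈ U, DifferentiableAt ℂ f x) ∧ (∀ x ∈ U, DifferentiableAt ℂ (deriv f) x) ∧
    ∀ x ∈ U, deriv (deriv f) x = Q x * f x

/-!
Liouville's transformation. If `P Ψ'' + P' Ψ' + R Ψ = 0` and `g² = P`, then differentiating
`g² = P` twice expresses `P'` and `P''` through `g`, `g'`, `g''`, and substituting the equation
into `(gΨ)'' = g''Ψ + 2g'Ψ' + gΨ''` kills the `Ψ'` term, leaving `(gΨ)'' = Q·gΨ` with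
`Q = (2PP'' - P'² - 4PR) / (4P²)`. For the second Chudnovsky equation `P = x(x² + 3x + 3)`,
`R = x + 1`, and this `Q` is `Q₂`.
-/

open Set Filter Topology

section Calculus

variable {𝕜 : Type*} [NontriviallyNormedField 𝕜] {U : Set 𝕜} {f g P : 𝕜 → 𝕜} {x : 𝕜}

theorem hasDerivAt_deriv_mul_of_isOpen (hU : IsOpen U)
    (hf : ∀ y ∈ U, DifferentiableAt 𝕜 f y) (hf' : ∀ y ∈ U, DifferentiableAt 𝕜 (deriv f) y)
    (hg : ∀ y ∈ U, DifferentiableAt 𝕜 g y) (hg' : ∀ y ∈ U, DifferentiableAt 𝕜 (deriv g) y)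
    (hx : x ∈ U) :
    HasDerivAt (deriv fun y => f y * g y)
      (deriv (deriv f) x * g x + 2 * deriv f x * deriv g x + f x * deriv (deriv g) x) x := by
  have hleibniz : (deriv fun y => f y * g y) =ᶠ[𝓝 x]
      fun y => deriv f y * g y + f y * deriv g y := by
    filter_upwards [hU.mem_nhds hx] with y hy using deriv_mul (hf y hy) (hg y hy)
  refine HasDerivAt.congr_of_eventuallyEq ?_ hleibniz
  exact (((hf' x hx).hasDerivAt.mul (hg x hx).hasDerivAt).add
    ((hf x hx).hasDerivAt.mul (hg' x hx).hasDerivAt)).congr_deriv (by ring)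

theorem deriv_eq_of_sq_eq (hU : IsOpen U) (hg : ∀ y ∈ U, DifferentiableAt 𝕜 g y)
    (hP : ∀ y ∈ U, g y ^ 2 = P y) (hx : x ∈ U) :
    deriv P x = 2 * g x * deriv g x := by
  have hPg : EqOn P (fun y => g y * g y) U := fun y hy => by rw [← hP y hy, sq]
  rw [hPg.deriv hU hx, deriv_fun_mul (hg x hx) (hg x hx)]
  ring

theorem deriv_deriv_eq_of_sq_eq (hU : IsOpen U) (hg : ∀ y ∈ U, DifferentiableAt 𝕜 g y)
    (hg' : ∀ y ∈ U, DifferentiableAt 𝕜 (deriv g) y) (hP : ∀ y ∈ U, g y ^ 2 = P y)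
    (hx : x ∈ U) :
    deriv (deriv P) x = 2 * deriv g x ^ 2 + 2 * g x * deriv (deriv g) x := by
  have hPg : EqOn P (fun y => g y * g y) U := fun y hy => by rw [← hP y hy, sq]
  rw [((hPg.deriv hU).deriv hU) hx,
    (hasDerivAt_deriv_mul_of_isOpen hU hg hg' hg hg' hx).deriv]
  ring

end Calculus

theorem liouville_identity {K : Type*} [Field K] [CharZero K] {G G₁ G₂ Ψ Ψ₁ Ψ₂ p p₁ p₂ r : K}
    (hp0 : p ≠ 0) (hp : p = G ^ 2) (hp₁ : p₁ = 2 * G * G₁)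
    (hp₂ : p₂ = 2 * G₁ ^ 2 + 2 * G * G₂) (hode : p * Ψ₂ + p₁ * Ψ₁ + r * Ψ = 0) :
    G₂ * Ψ + 2 * G₁ * Ψ₁ + G * Ψ₂
      = (2 * p * p₂ - p₁ ^ 2 - 4 * p * r) / (4 * p ^ 2) * (G * Ψ) := by
  rw [div_mul_eq_mul_div, eq_div_iff (by simp [hp0])]
  subst hp hp₁ hp₂
  linear_combination 4 * G ^ 3 * hode

theorem SolvesOn.congr_potential {Q Q' f : ℂ → ℂ} {U : Set ℂ} (h : SolvesOn Q f U)
    (hQ : EqOn Q Q' U) : SolvesOn Q' f U :=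
  ⟨h.1, h.2.1, fun x hx => by rw [h.2.2 x hx, hQ hx]⟩

theorem solvesOn_mul_of_sq_eq {U : Set ℂ} (hU : IsOpen U) {P R Ψ g : ℂ → ℂ}
    (hP0 : ∀ x ∈ U, P x ≠ 0)
    (hΨ : ∀ x ∈ U, DifferentiableAt ℂ Ψ x) (hΨ' : ∀ x ∈ U, DifferentiableAt ℂ (deriv Ψ) x)
    (hode : ∀ x ∈ U, P x * deriv (deriv Ψ) x + deriv P x * deriv Ψ x + R x * Ψ x = 0)
    (hg : ∀ x ∈ U, DifferentiableAt ℂ g x) (hg' : ∀ x ∈ U, DifferentiableAt ℂ (deriv g) x)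
    (hgP : ∀ x ∈ U, g x ^ 2 = P x) :
    SolvesOn (fun x => (2 * P x * deriv (deriv P) x - deriv P x ^ 2 - 4 * P x * R x)
        / (4 * P x ^ 2)) (fun x => g x * Ψ x) U := by
  refine ⟨fun x hx => (hg x hx).mul (hΨ x hx), fun x hx => ?_, fun x hx => ?_⟩
  · exact (hasDerivAt_deriv_mul_of_isOpen hU hg hg' hΨ hΨ' hx).differentiableAt
  · rw [(hasDerivAt_deriv_mul_of_isOpen hU hg hg' hΨ hΨ' hx).deriv]
    exact liouville_identity (hP0 x hx) (hgP x hx).symm (deriv_eq_of_sq_eq hU hg hgP hx)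
      (deriv_deriv_eq_of_sq_eq hU hg hg' hgP hx) (hode x hx)

theorem chudnovsky_two_normal_form
    (U : Set ℂ) (hU : IsOpen U)
    (hUne : ∀ x ∈ U, x * (x ^ 2 + 3 * x + 3) ≠ 0)
    (Ψ g : ℂ → ℂ)
    (hΨ1 : ∀ x ∈ U, DifferentiableAt ℂ Ψ x)
    (hΨ2 : ∀ x ∈ U, DifferentiableAt ℂ (deriv Ψ) x)
    (hode : ∀ x ∈ U, x * (x ^ 2 + 3 * x + 3) * deriv (deriv Ψ) x
      + (3 * x ^ 2 + 6 * x + 3) * deriv Ψ x + (x + 1) * Ψ x = 0)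
    (hg1 : ∀ x ∈ U, DifferentiableAt ℂ g x)
    (hg2 : ∀ x ∈ U, DifferentiableAt ℂ (deriv g) x)
    (hgsq : ∀ x ∈ U, g x ^ 2 = x * (x ^ 2 + 3 * x + 3)) :
    SolvesOn (fun x => -(1 / 4) * ((x + 1) * (x + 3) * (x ^ 2 + 3))
        / (x ^ 2 * (x ^ 2 + 3 * x + 3) ^ 2))
      (fun x => g x * Ψ x) U := by
  have hP' : (deriv fun x : ℂ => x * (x ^ 2 + 3 * x + 3)) = fun x => 3 * x ^ 2 + 6 * x + 3 := by
    funext x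
    rw [((hasDerivAt_id' x).fun_mul
      (((hasDerivAt_pow 2 x).fun_add ((hasDerivAt_id' x).const_mul 3)).add_const 3)).deriv]
    ring
  have hP'' : (deriv fun x : ℂ => 3 * x ^ 2 + 6 * x + 3) = fun x => 6 * x + 6 := by
    funext x
    rw [((((hasDerivAt_pow 2 x).const_mul 3).fun_add
      ((hasDerivAt_id' x).const_mul 6)).add_const 3).deriv]
    ring
  refine (solvesOn_mul_of_sq_eq (P := fun x => x * (x ^ 2 + 3 * x + 3)) (R := fun x => x + 1)
    hU hUne hΨ1 hΨ2 (by rw [hP']; exact hode) hg1 hg2 hgsq).congr_potential fun x hx => ?_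
  have hx0 : x ≠ 0 := left_ne_zero_of_mul (hUne x hx)
  have hq0 : x ^ 2 + 3 * x + 3 ≠ 0 := right_ne_zero_of_mul (hUne x hx)
  simp only [hP', hP'']
  field_simp
  ring
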